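/- Let d ≥ 2, t ≥ 1 and L ≥ 2t + 30 be integers, and let w, u ∈ ℤ^d satisfy ‖w‖₁ = L − t, ‖u − w‖₁ = t + 10 and ‖u‖₁ ≤ L − 1. Then there exists an induced path P' in ℤ^d starting at u, passing through w, and ending at a point z with ‖z‖₁ = L, such that every vertex of P' other than u lies in the ball B¹_{t+9}(w) = {x : ‖x−w‖₁ ≤ t+9}, and z is the only vertex of P' whose ℓ1-norm is at least L. -/

import Mathlib

/-!
A walk in `ℤ^d` with steps of length at most one whose endpoints are at `ℓ1`-distance equal to
its length is a geodesic, hence an induced path. Since `‖u‖₁ < L + 10 = ‖w‖₁ + ‖u - w‖₁`, some coordinate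
`i` has `w i ≠ 0` with `w i - u i` of the same sign; pushing `w` by `t` in that direction gives `z`
with `‖z‖₁ = ‖w‖₁ + t = L` and `w` on a geodesic from `u` to `z`. Route that geodesic through the
coordinatewise median `m` of `u`, `w`, `0`: the norm falls from `u` to `m` and rises from `m` to
`z`, so every vertex before `z` has norm at most `max ‖u‖₁ (L - 1) < L`, and every vertex but `u`
is within `t + 9` of `w`.
-/

/-- The `ℓ1`-norm of a point of `ℤ^d`. -/
def norm1 {d : ℕ} (x : Fin d → ℤ) : ℤ := ∑ i, |x i|

/-- Grid adjacency in `ℤ^d`: `u` and `v` are adjacent iff `‖u - v‖₁ = 1`. -/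
def Adj {d : ℕ} (u v : Fin d → ℤ) : Prop := norm1 (u - v) = 1

/-- A (self-avoiding) path in the grid graph `ℤ^d`: a nonempty list of distinct
points in which consecutive points are adjacent. -/
def IsPath {d : ℕ} (P : List (Fin d → ℤ)) : Prop :=
  P ≠ [] ∧ P.Nodup ∧ P.Chain' Adj

/-- An induced path in `ℤ^d`: a path in which two of its points are adjacent
iff they are consecutive. -/
def IsInducedPath {d : ℕ} (P : List (Fin d → ℤ)) : Prop :=
  IsPath P ∧ ∀ i j : Fin P.length, (i : ℕ) + 1 < (j : ℕ) → ¬ Adj (P.get i) (P.get j)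

section Norm1

variable {d : ℕ}

lemma norm1_nonneg (x : Fin d → ℤ) : 0 ≤ norm1 x :=
  Finset.sum_nonneg fun i _ => abs_nonneg (x i)

@[simp] lemma norm1_zero : norm1 (0 : Fin d → ℤ) = 0 := by
  simp [norm1]

@[simp] lemma norm1_neg (x : Fin d → ℤ) : norm1 (-x) = norm1 x := by
  simp [norm1]

lemma norm1_sub_comm (x y : Fin d → ℤ) : norm1 (x - y) = norm1 (y - x) := by
  rw [← neg_sub, norm1_neg]

lemma norm1_add_le (x y : Fin d → ℤ) : norm1 (x + y) ≤ norm1 x + norm1 y := by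
  unfold norm1
  rw [← Finset.sum_add_distrib]
  exact Finset.sum_le_sum fun i _ => abs_add_le (x i) (y i)

lemma norm1_sub_le_add (x y z : Fin d → ℤ) : norm1 (x - z) ≤ norm1 (x - y) + norm1 (y - z) := by
  simpa using norm1_add_le (x - y) (y - z)

lemma eq_of_norm1_sub_eq_zero {x y : Fin d → ℤ} (h : norm1 (x - y) = 0) : x = y := by
  funext i
  have := (Finset.sum_eq_zero_iff_of_nonneg fun j _ => abs_nonneg ((x - y) j)).1 h i
    (Finset.mem_univ i)
  simpa [sub_eq_zero] using this

lemma norm1_add_single (x : Fin d → ℤ) (i : Fin d) (c : ℤ) :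
    norm1 (x + Pi.single i c) + |x i| = norm1 x + |x i + c| := by
  unfold norm1
  rw [Fintype.sum_eq_add_sum_compl i, Fintype.sum_eq_add_sum_compl i (fun j => |x j|)]
  have hrest : ∑ j ∈ {i}ᶜ, |(x + Pi.single i c : Fin d → ℤ) j| = ∑ j ∈ {i}ᶜ, |x j| :=
    Finset.sum_congr rfl fun j hj => by
      rw [Finset.mem_compl, Finset.mem_singleton] at hj
      simp [hj]
  rw [hrest]
  simp only [Pi.add_apply, Pi.single_eq_same]
  ring

lemma norm1_single (i : Fin d) (c : ℤ) : norm1 (Pi.single i c : Fin d → ℤ) = |c| := by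
  simpa using norm1_add_single 0 i c

lemma exists_norm1_sub_eq_one_of_ne {x y : Fin d → ℤ} (h : x ≠ y) :
    ∃ x', norm1 (x' - x) = 1 ∧ norm1 (x' - y) + 1 = norm1 (x - y) := by
  obtain ⟨i, hi⟩ := Function.ne_iff.1 h
  obtain ⟨c, hc, hcloser⟩ : ∃ c : ℤ, |c| = 1 ∧ |x i - y i + c| + 1 = |x i - y i| := by
    rcases lt_or_gt_of_ne hi with hlt | hgt
    · exact ⟨1, rfl, by simp only [abs_eq_max_neg]; omega⟩
    · exact ⟨-1, rfl, by simp only [abs_eq_max_neg]; omega⟩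
  refine ⟨x + Pi.single i c, by rw [add_sub_cancel_left, norm1_single, hc], ?_⟩
  have key := norm1_add_single (x - y) i c
  rw [Pi.sub_apply] at key
  rw [add_sub_right_comm]
  linarith

end Norm1

section Between

variable {d : ℕ}

def L1Btw (x m y : Fin d → ℤ) : Prop :=
  norm1 (x - m) + norm1 (m - y) = norm1 (x - y)

lemma l1Btw_of_forall {x m y : Fin d → ℤ} (h : ∀ i, |x i - m i| + |m i - y i| = |x i - y i|) :
    L1Btw x m y := by
  unfold L1Btw norm1
  rw [← Finset.sum_add_distrib]
  exact Finset.sum_congr rfl fun i _ => h i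

lemma L1Btw.trans_right {x y m z : Fin d → ℤ} (hy : L1Btw x y z) (hm : L1Btw y m z) :
    L1Btw x m z := by
  unfold L1Btw at *
  have := norm1_sub_le_add x y m
  have := norm1_sub_le_add x m z
  omega

def median (x y z : Fin d → ℤ) : Fin d → ℤ :=
  fun i => max (min (x i) (y i)) (min (max (x i) (y i)) (z i))

lemma l1Btw_median₁₂ (x y z : Fin d → ℤ) : L1Btw x (median x y z) y :=
  l1Btw_of_forall fun i => by simp only [median, abs_eq_max_neg]; omega

lemma l1Btw_median₁₃ (x y z : Fin d → ℤ) : L1Btw x (median x y z) z :=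
  l1Btw_of_forall fun i => by simp only [median, abs_eq_max_neg]; omega

lemma l1Btw_median₂₃ (x y z : Fin d → ℤ) : L1Btw y (median x y z) z :=
  l1Btw_of_forall fun i => by simp only [median, abs_eq_max_neg]; omega

lemma exists_l1Btw_extension {u w : Fin d → ℤ} (h : norm1 u < norm1 w + norm1 (u - w)) (s : ℕ) :
    ∃ z, norm1 (w - z) = s ∧ L1Btw u w z ∧ L1Btw z w 0 := by
  obtain ⟨i, -, hi⟩ : ∃ i ∈ Finset.univ, |u i| < |w i| + |(u - w) i| := by
    apply Finset.exists_lt_of_sum_lt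
    simpa only [norm1, ← Finset.sum_add_distrib] using h
  obtain ⟨c, hc, hout, hbeyond⟩ : ∃ c : ℤ,
      |c| = s ∧ |w i + c| = |w i| + s ∧ |u i - w i - c| = |u i - w i| + s := by
    rw [Pi.sub_apply] at hi
    rcases lt_or_ge 0 (w i) with hpos | hneg
    · exact ⟨s, by simp, by simp only [abs_eq_max_neg] at hi ⊢; omega,
        by simp only [abs_eq_max_neg] at hi ⊢; omega⟩
    · exact ⟨-s, by simp, by simp only [abs_eq_max_neg] at hi ⊢; omega,
        by simp only [abs_eq_max_neg] at hi ⊢; omega⟩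
  have hwz : w - (w + Pi.single i c) = -Pi.single i c := by abel
  have huz : u - (w + Pi.single i c) = u - w + Pi.single i (-c) := by rw [Pi.single_neg]; abel
  have hnorm_z := norm1_add_single w i c
  have hnorm_uz := norm1_add_single (u - w) i (-c)
  rw [Pi.sub_apply, ← sub_eq_add_neg] at hnorm_uz
  refine ⟨w + Pi.single i c, ?_, ?_, ?_⟩
  · rw [hwz, norm1_neg, norm1_single, hc]
  · unfold L1Btw
    rw [hwz, huz, norm1_neg, norm1_single]
    linarith
  · unfold L1Btw
    rw [add_sub_cancel_left, norm1_single, sub_zero, sub_zero]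
    linarith

end Between

section Walk

variable {d : ℕ}

def IsLazyWalk (f : ℕ → Fin d → ℤ) : Prop :=
  ∀ k, norm1 (f (k + 1) - f k) ≤ 1

def IsGeodesicOn (f : ℕ → Fin d → ℤ) (N : ℕ) : Prop :=
  ∀ j k, j ≤ k → k ≤ N → norm1 (f k - f j) = k - j

lemma IsLazyWalk.norm1_sub_le {f : ℕ → Fin d → ℤ} (hf : IsLazyWalk f) {j k : ℕ} (hjk : j ≤ k) :
    norm1 (f k - f j) ≤ k - j := by
  induction k, hjk using Nat.le_induction with
  | base => simp
  | succ k _ ih =>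
    calc norm1 (f (k + 1) - f j) ≤ norm1 (f (k + 1) - f k) + norm1 (f k - f j) :=
          norm1_sub_le_add _ _ _
      _ ≤ 1 + (k - j) := add_le_add (hf k) ih
      _ = ((k + 1 : ℕ) : ℤ) - j := by push_cast; ring

lemma IsLazyWalk.isGeodesicOn {f : ℕ → Fin d → ℤ} (hf : IsLazyWalk f) {N : ℕ}
    (hN : norm1 (f N - f 0) = N) : IsGeodesicOn f N := by
  intro j k hjk hkN
  have h₁ := hf.norm1_sub_le hjk
  have h₂ := hf.norm1_sub_le (Nat.zero_le j)
  have h₃ := hf.norm1_sub_le hkN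
  have := norm1_sub_le_add (f N) (f k) (f 0)
  have := norm1_sub_le_add (f k) (f j) (f 0)
  push_cast at h₂
  omega

lemma IsLazyWalk.exists_prepend {g : ℕ → Fin d → ℤ} (hg : IsLazyWalk g) (n : ℕ) :
    ∀ x, norm1 (x - g 0) = n → ∃ f, IsLazyWalk f ∧ f 0 = x ∧ ∀ k, f (n + k) = g k := by
  induction n with
  | zero =>
    intro x hx
    exact ⟨g, hg, (eq_of_norm1_sub_eq_zero hx).symm, by simp⟩
  | succ n ih =>
    intro x hx
    have hne : x ≠ g 0 := fun h => by simp [h] at hx; omega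
    obtain ⟨x', hstep, hcloser⟩ := exists_norm1_sub_eq_one_of_ne hne
    obtain ⟨f, hf, hf0, hfg⟩ := ih x' (by push_cast at hx; linarith)
    refine ⟨fun | 0 => x | k + 1 => f k, ?_, rfl, fun k => ?_⟩
    · rintro (_ | k)
      · simp [hf0, hstep]
      · exact hf k
    · simp only [Nat.add_right_comm n 1 k, hfg]

lemma exists_isLazyWalk_through (u m w z : Fin d → ℤ) {a b c : ℕ} (ha : norm1 (u - m) = a)
    (hb : norm1 (m - w) = b) (hc : norm1 (w - z) = c) :
    ∃ f : ℕ → Fin d → ℤ, IsLazyWalk f ∧ f 0 = u ∧ f a = m ∧ f (a + b) = w ∧ f (a + b + c) = z := by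
  have hz : IsLazyWalk fun _ => z := fun _ => by simp
  obtain ⟨f₃, hf₃, hf₃0, hf₃z⟩ := hz.exists_prepend c w hc
  obtain ⟨f₂, hf₂, hf₂0, hf₂f₃⟩ := hf₃.exists_prepend b m (by rw [hf₃0, hb])
  obtain ⟨f₁, hf₁, hf₁0, hf₁f₂⟩ := hf₂.exists_prepend a u (by rw [hf₂0, ha])
  refine ⟨f₁, hf₁, hf₁0, ?_, ?_, ?_⟩
  · simpa [hf₂0] using hf₁f₂ 0
  · rw [hf₁f₂, ← add_zero b, hf₂f₃, hf₃0]
  · simpa [add_assoc, hf₁f₂, hf₂f₃] using hf₃z 0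

end Walk

namespace IsGeodesicOn

variable {d : ℕ} {f : ℕ → Fin d → ℤ} {N : ℕ}

lemma norm1_sub (hf : IsGeodesicOn f N) {j k : ℕ} (hj : j ≤ N) (hk : k ≤ N) :
    norm1 (f k - f j) = |(k : ℤ) - j| := by
  rcases le_total j k with hjk | hkj
  · rw [hf j k hjk hk, abs_of_nonneg (by omega)]
  · rw [norm1_sub_comm, hf k j hkj hj, abs_of_nonpos (by omega)]
    ring

lemma isInducedPath (hf : IsGeodesicOn f N) : IsInducedPath ((List.range (N + 1)).map f) := by
  have hfar : ∀ j k, j + 1 < k → k ≤ N → ¬ Adj (f j) (f k) := fun j k hjk hkN hadj => by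
    unfold Adj at hadj
    rw [norm1_sub_comm, hf j k (by omega) hkN] at hadj
    omega
  refine ⟨⟨by simp, ?_, ?_⟩, fun i j hij => ?_⟩
  · refine List.Nodup.map_on (fun j hj k hk hjk => ?_) List.nodup_range
    rw [List.mem_range] at hj hk
    have := hf.norm1_sub (Nat.lt_succ_iff.1 hj) (Nat.lt_succ_iff.1 hk)
    rw [hjk, sub_self, norm1_zero, abs_eq_max_neg] at this
    omega
  · rw [List.Chain', List.isChain_map, List.isChain_range_succ]
    intro k hk
    unfold Adj
    rw [norm1_sub_comm, hf k (k + 1) (by omega) hk]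
    push_cast
    ring
  · have hj := j.isLt
    simp only [List.length_map, List.length_range] at hj
    simpa using hfar i j hij (by omega)

/-- The point `f A` lies on geodesics from `0` to both ends, so `norm1 ∘ f` falls by one per
step up to time `A` and rises by one per step afterwards. -/
lemma norm1_le_max_of_valley (hf : IsGeodesicOn f N) {A : ℕ} (hAN : A ≤ N)
    (h₀ : L1Btw (f 0) (f A) 0) (hN : L1Btw (f N) (f A) 0) {k : ℕ} (hk : k < N) :
    norm1 (f k) ≤ max (norm1 (f 0)) (norm1 (f N) - 1) := by
  unfold L1Btw at h₀ hN
  simp only [sub_zero] at h₀ hN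
  have hkA := norm1_sub_le_add (f k) (f A) 0
  rw [sub_zero, sub_zero, hf.norm1_sub hAN hk.le] at hkA
  rw [norm1_sub_comm, hf 0 A (Nat.zero_le A) hAN] at h₀
  rw [hf A N hAN le_rfl] at hN
  simp only [abs_eq_max_neg] at hkA
  push_cast at *
  omega

end IsGeodesicOn

lemma exists_isGeodesicOn_escaping {d : ℕ} {u w : Fin d → ℤ}
    (h : norm1 u < norm1 w + norm1 (u - w)) {K : ℕ} (hK : norm1 (u - w) = K) (s : ℕ) :
    ∃ f : ℕ → Fin d → ℤ, IsGeodesicOn f (K + s) ∧ f 0 = u ∧ f K = w ∧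
      norm1 (f (K + s)) = norm1 w + s ∧
      ∀ k < K + s, norm1 (f k) ≤ max (norm1 u) (norm1 w + s - 1) := by
  obtain ⟨z, hwz, huwz, hzw0⟩ := exists_l1Btw_extension h s
  have hz : norm1 z = norm1 w + s := by
    unfold L1Btw at hzw0
    rw [sub_zero, sub_zero, norm1_sub_comm, hwz] at hzw0
    omega
  set m := median u w 0
  have humw : L1Btw u m w := l1Btw_median₁₂ u w 0
  obtain ⟨a, ha⟩ := Int.eq_ofNat_of_zero_le (norm1_nonneg (u - m))
  obtain ⟨b, hb⟩ := Int.eq_ofNat_of_zero_le (norm1_nonneg (m - w))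
  obtain rfl : a + b = K := by unfold L1Btw at humw; omega
  obtain ⟨f, hf, hf0, hfm, hfw, hfz⟩ := exists_isLazyWalk_through u m w z ha hb hwz
  have hgeo : IsGeodesicOn f (a + b + s) := hf.isGeodesicOn <| by
    unfold L1Btw at huwz humw
    rw [hf0, hfz, norm1_sub_comm]
    push_cast
    omega
  refine ⟨f, hgeo, hf0, hfw, by rw [hfz, hz], fun k hk => ?_⟩
  have := hgeo.norm1_le_max_of_valley (A := a) (by omega)
    (by rw [hf0, hfm]; exact l1Btw_median₁₃ u w 0)
    (by rw [hfz, hfm]; exact hzw0.trans_right (l1Btw_median₂₃ u w 0)) hk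
  rwa [hf0, hfz, hz] at this

theorem statement13_general (d : ℕ) (t L : ℤ) (ht : 1 ≤ t)
    (w u : Fin d → ℤ)
    (hw : norm1 w = L - t) (huw : norm1 (u - w) = t + 10) (hu : norm1 u ≤ L - 1) :
    ∃ (P' : List (Fin d → ℤ)) (hne : P' ≠ []),
      IsInducedPath P' ∧
      P'.head hne = u ∧
      w ∈ P' ∧
      norm1 (P'.getLast hne) = L ∧
      (∀ x ∈ P', x ≠ u → norm1 (x - w) ≤ t + 9) ∧
      (∀ x ∈ P', L ≤ norm1 x → x = P'.getLast hne) := by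
  lift t to ℕ using by omega
  obtain ⟨f, hgeo, hf0, hfw, hfN, hbelow⟩ :=
    exists_isGeodesicOn_escaping (u := u) (w := w) (K := t + 10) (by omega) (by push_cast; omega) t
  have hlast : ∀ h, ((List.range (t + 10 + t + 1)).map f).getLast h = f (t + 10 + t) :=
    fun _ => by simp
  refine ⟨_, by simp, hgeo.isInducedPath, by simp [hf0],
    List.mem_map.2 ⟨t + 10, List.mem_range.2 (by omega), hfw⟩, by rw [hlast, hfN, hw]; ring,
    ?_, ?_⟩
  · simp only [List.mem_map, List.mem_range, forall_exists_index, and_imp]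
    rintro _ k hk rfl hku
    have hk0 : k ≠ 0 := by rintro rfl; exact hku hf0
    rw [← hfw, hgeo.norm1_sub (by omega) (by omega), abs_eq_max_neg]
    omega
  · simp only [List.mem_map, List.mem_range, forall_exists_index, and_imp, hlast]
    rintro _ k hk rfl hLk
    obtain rfl : k = t + 10 + t := by
      by_contra hkN
      have := hbelow k (by omega)
      omega
    rfl

theorem statement13 (d : ℕ) (hd : 2 ≤ d) (t L : ℤ) (ht : 1 ≤ t)
    (hL : 2 * t + 30 ≤ L) (w u : Fin d → ℤ)
    (hw : norm1 w = L - t) (huw : norm1 (u - w) = t + 10) (hu : norm1 u ≤ L - 1) :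
    ∃ (P' : List (Fin d → ℤ)) (hne : P' ≠ []),
      IsInducedPath P' ∧
      P'.head hne = u ∧
      w ∈ P' ∧
      norm1 (P'.getLast hne) = L ∧
      (∀ x ∈ P', x ≠ u → norm1 (x - w) ≤ t + 9) ∧
      (∀ x ∈ P', L ≤ norm1 x → x = P'.getLast hne) :=
  statement13_general d t L ht w u hw huw hu
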